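/- For all d ≥ 1 and n ≥ 0, the number of possible positions of an n-step simple random walk on Z^d equals |P_n^d| = ∑_{k=0}^{d-1} C(d-1, k) · C(d+n-k, d). -/

import Mathlib

/-!
A point `x` is reachable in `n` steps iff `‖x‖₁ ≤ n` and `‖x‖₁ ≡ n [MOD 2]`: every step changes
`‖x‖₁` by one, a shortest walk to `x` has `‖x‖₁` steps, and surplus steps are spent in pairs
going back and forth along one axis. Sorting these points by their first
coordinate `t` gives `N(d+1, n) = ∑_{|t| ≤ n} N(d, n - |t|)`, hence
`N(d+1, n+1) = N(d+1, n) + N(d, n+1) + N(d, n)`. By Pascal's rule the binomial sum satisfies the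
same recurrence, and both equal `1` at `n = 0` and `n + 1` at `d = 1`.
-/

open Finset

/-- The set of positions in `ℤ^d` reachable from the origin in exactly `n` steps,
each step being a standard unit vector or its negative. -/
def P (d n : ℕ) : Set (Fin d → ℤ) :=
  {x | ∃ f : Fin n → Fin d → ℤ,
    (∀ i, ∃ j : Fin d, f i = Pi.single j 1 ∨ f i = Pi.single j (-1)) ∧
    x = ∑ i, f i}

section L1Norm

variable {ι : Type*} [Fintype ι]

def l1Norm (x : ι → ℤ) : ℕ := ∑ i, (x i).natAbs

theorem l1Norm_eq_zero {x : ι → ℤ} : l1Norm x = 0 ↔ x = 0 := by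
  simp [l1Norm, sum_eq_zero_iff, funext_iff]

theorem natAbs_le_l1Norm (x : ι → ℤ) (i : ι) : (x i).natAbs ≤ l1Norm x :=
  single_le_sum (f := fun i ↦ (x i).natAbs) (fun _ _ ↦ Nat.zero_le _) (mem_univ i)

theorem l1Norm_add_single [DecidableEq ι] (x : ι → ℤ) (j : ι) (c : ℤ) :
    l1Norm (x + Pi.single j c) + (x j).natAbs = l1Norm x + (x j + c).natAbs := by
  have hoff : ∀ i ∈ univ.erase j, ((x + Pi.single j c : ι → ℤ) i).natAbs = (x i).natAbs :=
    fun i hi ↦ by simp [Pi.single_eq_of_ne (ne_of_mem_erase hi)]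
  simp only [l1Norm, ← add_sum_erase _ _ (mem_univ j), sum_congr rfl hoff]
  simp only [Pi.add_apply, Pi.single_eq_same]
  ring

theorem l1Norm_eq_natAbs_add_tail {d : ℕ} (x : Fin (d + 1) → ℤ) :
    l1Norm x = (x 0).natAbs + l1Norm (Fin.tail x) :=
  Fin.sum_univ_succ _

end L1Norm

theorem sum_Icc_natAbs {M : Type*} [AddCommMonoid M] (f : ℕ → M) (n : ℕ) :
    ∑ t ∈ Icc (-n : ℤ) n, f t.natAbs = f 0 + 2 • ∑ m ∈ range n, f (m + 1) := by
  induction n with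
  | zero => simp
  | succ n ih =>
    have hIcc : Icc (-(n + 1 : ℕ) : ℤ) (n + 1 : ℕ) =
        insert (-(n + 1 : ℤ)) (insert (n + 1 : ℤ) (Icc (-n : ℤ) n)) := by
      ext a
      simp only [mem_Icc, mem_insert]
      omega
    rw [hIcc, sum_insert (by simp only [mem_insert, mem_Icc]; omega),
      sum_insert (by simp only [mem_Icc]; omega), ih, sum_range_succ]
    have h1 : (-(n + 1 : ℤ)).natAbs = n + 1 := by omega
    have h2 : (n + 1 : ℤ).natAbs = n + 1 := by omega
    rw [h1, h2, smul_add, two_smul]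
    abel

theorem sum_Icc_natAbs_sub {M : Type*} [AddCommMonoid M] (g : ℕ → M) (n : ℕ) :
    ∑ t ∈ Icc (-n : ℤ) n, g (n - t.natAbs) = g n + 2 • ∑ m ∈ range n, g m := by
  rw [sum_Icc_natAbs (fun m ↦ g (n - m)), ← sum_range_reflect g n, Nat.sub_zero]
  congr 2
  exact sum_congr rfl fun m _ ↦ by rw [Nat.sub_sub, add_comm m 1]

section Reachable

variable {d n : ℕ}

theorem P_zero : P d 0 = {0} := by
  ext x
  constructor
  · rintro ⟨f, -, rfl⟩
    simp
  · rintro rfl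
    exact ⟨Fin.elim0, fun i ↦ i.elim0, by simp⟩

theorem mem_P_succ {x : Fin d → ℤ} :
    x ∈ P d (n + 1) ↔
      ∃ y ∈ P d n, ∃ j, ∃ c : ℤ, c.natAbs = 1 ∧ x = y + Pi.single j c := by
  constructor
  · rintro ⟨f, hf, rfl⟩
    obtain ⟨j, hj⟩ := hf 0
    refine ⟨∑ i : Fin n, f i.succ, ⟨_, fun i ↦ hf i.succ, rfl⟩, j, ?_⟩
    rw [Fin.sum_univ_succ, add_comm]
    rcases hj with hj | hj
    · exact ⟨1, rfl, by rw [hj]⟩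
    · exact ⟨-1, rfl, by rw [hj]⟩
  · rintro ⟨y, ⟨f, hf, rfl⟩, j, c, hc, rfl⟩
    refine ⟨Fin.cons (Pi.single j c) f, fun i ↦ ?_, by rw [Fin.sum_cons, add_comm]⟩
    refine Fin.cases ⟨j, ?_⟩ (fun i ↦ by simpa using hf i) i
    rcases Int.natAbs_eq_iff.mp hc with rfl | rfl <;> simp

theorem l1Norm_le_and_mod_of_mem_P {x : Fin d → ℤ} (hx : x ∈ P d n) :
    l1Norm x ≤ n ∧ l1Norm x % 2 = n % 2 := by
  induction n generalizing x with
  | zero =>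
    rw [P_zero, Set.mem_singleton_iff] at hx
    simp [hx, l1Norm_eq_zero.mpr]
  | succ n ih =>
    obtain ⟨y, hy, j, c, hc, rfl⟩ := mem_P_succ.mp hx
    have hstep := l1Norm_add_single y j c
    have hy' := ih hy
    omega

theorem mem_P_l1Norm (x : Fin d → ℤ) : x ∈ P d (l1Norm x) := by
  induction h : l1Norm x generalizing x with
  | zero => simp_all [P_zero, l1Norm_eq_zero]
  | succ m ih =>
    obtain ⟨j, hj⟩ : ∃ j, x j ≠ 0 := by
      by_contra! hx
      simp [funext hx, l1Norm] at h
    obtain ⟨c, hc, hcx⟩ : ∃ c : ℤ, c.natAbs = 1 ∧ (x j - c).natAbs + 1 = (x j).natAbs := by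
      rcases lt_or_gt_of_ne hj with hneg | hpos
      · exact ⟨-1, rfl, by omega⟩
      · exact ⟨1, rfl, by omega⟩
    have hnorm := l1Norm_add_single (x - Pi.single j c) j c
    rw [sub_add_cancel, Pi.sub_apply, Pi.single_eq_same, sub_add_cancel] at hnorm
    exact mem_P_succ.mpr ⟨_, ih _ (by omega), j, c, hc, (sub_add_cancel x _).symm⟩

theorem P_subset_P_add_two (hd : 0 < d) : P d n ⊆ P d (n + 2) := fun y hy ↦ by
  have hback := mem_P_succ.mpr ⟨y, hy, ⟨0, hd⟩, 1, rfl, rfl⟩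
  refine mem_P_succ.mpr ⟨_, hback, ⟨0, hd⟩, -1, rfl, ?_⟩
  rw [add_assoc, ← Pi.single_add, add_neg_cancel, Pi.single_zero, add_zero]

theorem mem_P_iff (hd : 0 < d) {x : Fin d → ℤ} :
    x ∈ P d n ↔ l1Norm x ≤ n ∧ l1Norm x % 2 = n % 2 := by
  refine ⟨l1Norm_le_and_mod_of_mem_P, ?_⟩
  rintro ⟨hle, hmod⟩
  obtain ⟨k, rfl⟩ : ∃ k, n = l1Norm x + 2 * k := ⟨(n - l1Norm x) / 2, by omega⟩
  clear hle hmod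
  induction k with
  | zero => exact mem_P_l1Norm x
  | succ k ih => exact P_subset_P_add_two hd ih

end Reachable

section Counting

noncomputable def parityBall (d n : ℕ) : Finset (Fin d → ℤ) :=
  {x ∈ Fintype.piFinset fun _ ↦ Icc (-n : ℤ) n | l1Norm x ≤ n ∧ l1Norm x % 2 = n % 2}

variable {d n : ℕ}

theorem mem_parityBall {x : Fin d → ℤ} :
    x ∈ parityBall d n ↔ l1Norm x ≤ n ∧ l1Norm x % 2 = n % 2 := by
  refine mem_filter.trans ⟨And.right, fun h ↦ ⟨Fintype.mem_piFinset.mpr fun i ↦ ?_, h⟩⟩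
  have := natAbs_le_l1Norm x i
  rw [mem_Icc]
  omega

theorem coe_parityBall (hd : 0 < d) : (parityBall d n : Set (Fin d → ℤ)) = P d n := by
  ext x
  rw [mem_coe, mem_parityBall, mem_P_iff hd]

theorem card_parityBall_succ_dim (d n : ℕ) :
    #(parityBall (d + 1) n) = ∑ t ∈ Icc (-n : ℤ) n, #(parityBall d (n - t.natAbs)) := by
  have hfirst : ∀ x ∈ parityBall (d + 1) n, x 0 ∈ Icc (-n : ℤ) n := fun x hx ↦ by
    have := natAbs_le_l1Norm x 0
    rw [mem_parityBall] at hx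
    rw [mem_Icc]
    omega
  rw [card_eq_sum_card_fiberwise hfirst]
  refine sum_congr rfl fun t ht ↦
    card_nbij' Fin.tail (fun y ↦ (Fin.cons t y : Fin (d + 1) → ℤ)) ?_ ?_ ?_ ?_
  · intro x hx
    simp only [coe_filter, Set.mem_ofPred_eq, mem_parityBall, l1Norm_eq_natAbs_add_tail x] at hx
    simp only [mem_coe, mem_parityBall]
    omega
  · intro y hy
    simp only [mem_coe, mem_parityBall] at hy
    simp only [coe_filter, Set.mem_ofPred_eq, mem_parityBall, l1Norm_eq_natAbs_add_tail,
      Fin.cons_zero, Fin.tail_cons, and_true]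
    rw [mem_Icc] at ht
    omega
  · intro x hx
    simp only [coe_filter, Set.mem_ofPred_eq] at hx
    rw [← hx.2]
    exact Fin.cons_self_tail x
  · intro y _
    exact Fin.tail_cons _ _

theorem card_parityBall_succ_succ (d n : ℕ) :
    #(parityBall (d + 1) (n + 1)) =
      #(parityBall (d + 1) n) + #(parityBall d (n + 1)) + #(parityBall d n) := by
  rw [card_parityBall_succ_dim, card_parityBall_succ_dim,
    sum_Icc_natAbs_sub (fun m ↦ #(parityBall d m)), sum_Icc_natAbs_sub (fun m ↦ #(parityBall d m)),
    sum_range_succ, smul_eq_mul, smul_eq_mul]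
  ring

theorem parityBall_zero_right (d : ℕ) : parityBall d 0 = {0} := by
  ext x
  rw [mem_parityBall, mem_singleton, Nat.le_zero, l1Norm_eq_zero]
  exact ⟨And.left, fun hx ↦ ⟨hx, by simp [hx, l1Norm]⟩⟩

theorem card_parityBall_zero_dim (n : ℕ) : #(parityBall 0 n) = (n + 1) % 2 := by
  have hmem (x : Fin 0 → ℤ) : x ∈ parityBall 0 n ↔ n % 2 = 0 := by
    simp [mem_parityBall, l1Norm, eq_comm]
  have hfilter : parityBall 0 n = univ.filter fun _ ↦ n % 2 = 0 :=
    ext fun x ↦ by simp only [hmem, mem_filter, mem_univ, true_and]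
  rw [hfilter, filter_const]
  split_ifs <;> simp <;> omega

theorem card_parityBall_one_dim (n : ℕ) : #(parityBall 1 n) = n + 1 := by
  induction n with
  | zero => simp [parityBall_zero_right]
  | succ n ih =>
    rw [card_parityBall_succ_succ, ih, card_parityBall_zero_dim, card_parityBall_zero_dim]
    omega

end Counting

section Formula

def positionCount (d n : ℕ) : ℕ := ∑ k ∈ range d, (d - 1).choose k * (d + n - k).choose d

variable {d : ℕ}

theorem positionCount_zero_right (hd : 0 < d) : positionCount d 0 = 1 := by
  rw [positionCount, sum_eq_single_of_mem 0 (mem_range.mpr hd)]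
  · simp
  · intro k hk hk0
    rw [Nat.choose_eq_zero_of_lt (by rw [mem_range] at hk; omega : d + 0 - k < d), mul_zero]

theorem positionCount_one (n : ℕ) : positionCount 1 n = n + 1 := by
  simp [positionCount, add_comm]

theorem positionCount_succ_succ (hd : 0 < d) (n : ℕ) :
    positionCount (d + 1) (n + 1) =
      positionCount (d + 1) n + positionCount d (n + 1) + positionCount d n := by
  obtain ⟨e, rfl⟩ : ∃ e, d = e + 1 := ⟨d - 1, by omega⟩
  have hpascal : positionCount (e + 1 + 1) (n + 1) = positionCount (e + 1 + 1) n +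
      ∑ k ∈ range (e + 1 + 1), (e + 1).choose k * (e + 1 + 1 + n - k).choose (e + 1) := by
    simp only [positionCount, ← sum_add_distrib]
    refine sum_congr rfl fun k hk ↦ ?_
    rw [mem_range] at hk
    rw [show e + 1 + 1 + (n + 1) - k = e + 1 + 1 + n - k + 1 by omega, Nat.choose_succ_succ',
      show e + 1 + 1 - 1 = e + 1 by omega]
    ring
  have hsplit := sum_choose_succ_mul (R := ℕ) (fun _ j ↦ (j + n + 1).choose (e + 1)) e
  simp only [Nat.cast_id] at hsplit
  rw [hpascal, add_assoc (positionCount (e + 1 + 1) n)]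
  congr 1
  simp only [positionCount, Nat.add_sub_cancel]
  refine (sum_congr rfl fun k hk ↦ ?_).trans (hsplit.trans (congrArg₂ _ ?_ ?_))
  · rw [mem_range] at hk
    rw [show e + 1 + 1 + n - k = e + 1 - k + n + 1 by omega]
  all_goals
    refine sum_congr rfl fun k hk ↦ ?_
    rw [mem_range] at hk
    congr 2
    omega

end Formula

theorem card_parityBall {d : ℕ} (hd : 0 < d) (n : ℕ) : #(parityBall d n) = positionCount d n := by
  induction d, hd using Nat.le_induction generalizing n with
  | base => rw [card_parityBall_one_dim, positionCount_one]
  | succ d hd ih =>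
    induction n with
    | zero => rw [parityBall_zero_right, card_singleton, positionCount_zero_right (by omega)]
    | succ n ihn => rw [card_parityBall_succ_succ, ihn, ih, ih, positionCount_succ_succ hd]

theorem stmt_5 (d n : ℕ) (hd : 1 ≤ d) :
    Nat.card (P d n) =
      ∑ k ∈ Finset.range d, (d - 1).choose k * (d + n - k).choose d := by
  rw [← coe_parityBall hd, Nat.card_coe_set_eq, Set.ncard_coe_finset]
  exact card_parityBall hd n
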